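/- arXiv:1505.01530 — 2 statements merged into one kernel-verified Lean document; each statement's English description precedes it below -/
import Mathlib

section
/- For all real b > 0 and c > 0, the series Σ_{n≥1} χ(n) · n / ( (n²+b²)² + c² ) equals (π/(4c)) · sinh((π/2)A(b,c)) · sin((π/2)B(b,c)) / ( sinh²((π/2)A(b,c)) + cos²((π/2)B(b,c)) ). -/
open Real

/-- Dedekind eta function on the imaginary axis: `dedekindEtaI x = η(i x)`
for real `x > 0`, with `q = e^{-2πx}`. -/
noncomputable def dedekindEtaI (x : ℝ) : ℝ :=
  Real.exp (-(π * x) / 12) * ∏' n : ℕ, (1 - Real.exp (-(2 * π * x) * (n + 1)))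

noncomputable def A (b c : ℝ) : ℝ := Real.sqrt ((Real.sqrt (b ^ 4 + c ^ 2) + b ^ 2) / 2)

noncomputable def B (b c : ℝ) : ℝ := Real.sqrt ((Real.sqrt (b ^ 4 + c ^ 2) - b ^ 2) / 2)

/-- The character χ with χ(n)=0 for even n, 1 for n ≡ 1 (mod 4), −1 for n ≡ 3 (mod 4). -/
noncomputable def chi (n : ℕ) : ℝ :=
  if n % 2 = 0 then 0 else if n % 4 = 1 then 1 else -1

open Complex MeasureTheory

/-!
Put `w = A + B i`, so that `w² = b² + c i` and `|n² + w²|² = (n² + b²)² + c²`; then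
`1 / (n² + w̄²) - 1 / (n² + w²) = 2 i c / ((n² + b²)² + c²)`.
The classical expansion `∑ χ(n) n / (n² + w²) = (π / 4) / cosh (π w / 2)` converges only
conditionally, but its difference for `w̄` and `w` converges absolutely: up to the factor `π / 4`
it is the Fourier series, evaluated at `π / 2`, of the continuous `π`-antiperiodic function equal
on `[0, π]` to `cosh (w̄ (π / 2 - x)) / cosh (w̄ π / 2) - cosh (w (π / 2 - x)) / cosh (w π / 2)`,
whose Fourier coefficients are `O(n⁻³)`. Finally `Im cosh (π w / 2) = sinh (π A / 2) sin (π B / 2)`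
and `|cosh (π w / 2)|² = sinh² (π A / 2) + cos² (π B / 2)`.
-/

namespace Complex

theorem cosh_add_mul_I (x y : ℝ) :
    cosh (x + y * I) = (Real.cosh x * Real.cos y : ℝ) + (Real.sinh x * Real.sin y : ℝ) * I := by
  rw [Complex.cosh_add, cosh_mul_I, Complex.sinh_mul_I, ← ofReal_cosh, ← ofReal_sinh,
    ← ofReal_cos, ← ofReal_sin]
  push_cast
  ring

theorem cosh_add_mul_I_im (x y : ℝ) : (cosh (x + y * I)).im = Real.sinh x * Real.sin y := by
  simp only [cosh_add_mul_I, add_im, ofReal_im, mul_im, ofReal_re, I_re, I_im]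
  ring

theorem normSq_cosh_add_mul_I (x y : ℝ) :
    normSq (cosh (x + y * I)) = Real.sinh x ^ 2 + Real.cos y ^ 2 := by
  rw [cosh_add_mul_I, normSq_add_mul_I]
  linear_combination Real.cos y ^ 2 * Real.cosh_sq x + Real.sinh x ^ 2 * Real.sin_sq_add_cos_sq y

theorem inv_conj_sub_inv (z : ℂ) :
    (starRingEnd ℂ z)⁻¹ - z⁻¹ = 2 * z.im * I / normSq z := by
  rw [inv_def, inv_def, conj_conj, normSq_conj, ← sub_mul, sub_conj, div_eq_mul_inv, ofReal_inv,
    ofReal_mul, ofReal_ofNat]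

theorem half_sq_le_norm_sq_add_sq {w : ℂ} {x : ℝ} (h : 2 * ‖w‖ ^ 2 ≤ x ^ 2) :
    x ^ 2 / 2 ≤ ‖(x : ℂ) ^ 2 + w ^ 2‖ := by
  have := norm_sub_le ((x : ℂ) ^ 2 + w ^ 2) (w ^ 2)
  rw [add_sub_cancel_right, norm_pow, norm_pow, norm_real, Real.norm_eq_abs, sq_abs] at this
  linarith

theorem norm_mul_one_div_sub_one_div_le {w₁ w₂ : ℂ} {x : ℝ} (hx : 1 ≤ x ^ 2)
    (h₁ : 2 * ‖w₁‖ ^ 2 ≤ x ^ 2) (h₂ : 2 * ‖w₂‖ ^ 2 ≤ x ^ 2) :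
    ‖x * (1 / ((x : ℂ) ^ 2 + w₁ ^ 2) - 1 / ((x : ℂ) ^ 2 + w₂ ^ 2))‖ ≤
      4 * ‖w₂ ^ 2 - w₁ ^ 2‖ / x ^ 2 := by
  have hx₀ : 0 < x ^ 2 := by linarith
  have d₁ := half_sq_le_norm_sq_add_sq h₁
  have d₂ := half_sq_le_norm_sq_add_sq h₂
  have n₁ : (x : ℂ) ^ 2 + w₁ ^ 2 ≠ 0 := norm_pos_iff.1 (by linarith)
  have n₂ : (x : ℂ) ^ 2 + w₂ ^ 2 ≠ 0 := norm_pos_iff.1 (by linarith)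
  have habs : |x| ≤ x ^ 2 := by nlinarith [abs_nonneg x, sq_abs x]
  rw [div_sub_div _ _ n₁ n₂, one_mul, mul_one, add_sub_add_left_eq_sub, norm_mul, norm_div,
    norm_mul, norm_real, Real.norm_eq_abs]
  calc |x| * (‖w₂ ^ 2 - w₁ ^ 2‖ / (‖(x : ℂ) ^ 2 + w₁ ^ 2‖ * ‖(x : ℂ) ^ 2 + w₂ ^ 2‖))
      ≤ x ^ 2 * (‖w₂ ^ 2 - w₁ ^ 2‖ / (x ^ 2 / 2 * (x ^ 2 / 2))) := by gcongr
    _ = 4 * ‖w₂ ^ 2 - w₁ ^ 2‖ / x ^ 2 := by field_simp; ring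

end Complex

-- Only the values on `[0, 2π]` matter: the function is used through its lift to the circle.
noncomputable def antiperiodicExt (h : ℝ → ℂ) (x : ℝ) : ℂ :=
  if x ≤ π then h x else -h (x - π)

instance : Fact (0 < 2 * π) := ⟨Real.two_pi_pos⟩

noncomputable def antiperiodicLift (h : ℝ → ℂ) : AddCircle (2 * π) → ℂ :=
  AddCircle.liftIco (2 * π) 0 (antiperiodicExt h)

section Antiperiodic

variable {h : ℝ → ℂ}

theorem continuous_antiperiodicExt (hc : Continuous h) (hπ : h π = -h 0) :
    Continuous (antiperiodicExt h) :=
  hc.if_le (hc.comp (continuous_id.sub continuous_const)).neg continuous_id continuous_const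
    fun x hx => by simp [hx, hπ]

theorem continuous_antiperiodicLift (hc : Continuous h) (hπ : h π = -h 0) :
    Continuous (antiperiodicLift h) := by
  refine AddCircle.liftIco_zero_continuous ?_ (continuous_antiperiodicExt hc hπ).continuousOn
  simp [antiperiodicExt, Real.pi_pos.le, Real.pi_pos.not_ge, hπ, two_mul]

theorem antiperiodicLift_coe {x : ℝ} (hx₀ : 0 ≤ x) (hxπ : x ≤ π) :
    antiperiodicLift h x = h x := by
  rw [antiperiodicLift, AddCircle.liftIco_zero_coe_apply ⟨hx₀, by linarith [Real.pi_pos]⟩,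
    antiperiodicExt, if_pos hxπ]

theorem exp_neg_int_mul_add_pi_mul_I (n : ℤ) (x : ℝ) :
    exp (-(n * ((x + π : ℝ) : ℂ) * I)) = (-1) ^ n * exp (-(n * x * I)) := by
  rw [show -(n * ((x + π : ℝ) : ℂ) * I) = -(n * x * I) + (-n : ℤ) * (π * I) by push_cast; ring,
    Complex.exp_add, exp_int_mul, exp_pi_mul_I, zpow_neg, ← inv_zpow, inv_neg, inv_one, mul_comm]

theorem fourierCoeff_antiperiodicLift (hc : Continuous h) (hπ : h π = -h 0) (n : ℤ) :
    fourierCoeff (antiperiodicLift h) n =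
      (1 - (-1) ^ n) / (2 * π) * ∫ x in 0..π, exp (-(n * x * I)) * h x := by
  set e : ℝ → ℂ := fun x => exp (-(n * x * I))
  have e_add_pi (x : ℝ) : e (x + π) = (-1) ^ n * e x := exp_neg_int_mul_add_pi_mul_I n x
  have he : Continuous e := by fun_prop
  have hint : Continuous fun x => e x * antiperiodicExt h x :=
    he.mul (continuous_antiperiodicExt hc hπ)
  have upper :
      ∫ x in π..2 * π, e x * antiperiodicExt h x = -(-1) ^ n * ∫ x in 0..π, e x * h x := by
    rw [show 2 * π = π + π by ring]
    nth_rw 1 [← zero_add π]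
    rw [← intervalIntegral.integral_comp_add_right, ← intervalIntegral.integral_const_mul]
    refine intervalIntegral.integral_congr fun x hx => ?_
    rw [Set.uIcc_of_le Real.pi_pos.le] at hx
    rw [e_add_pi, antiperiodicExt]
    split_ifs with hxπ
    · obtain rfl : x = 0 := by linarith [hx.1]
      rw [zero_add, hπ]; ring
    · rw [add_sub_cancel_right]; ring
  have lower : ∫ x in 0..π, e x * antiperiodicExt h x = ∫ x in 0..π, e x * h x := by
    refine intervalIntegral.integral_congr fun x hx => ?_
    rw [Set.uIcc_of_le Real.pi_pos.le] at hx
    rw [antiperiodicExt, if_pos hx.2]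
  rw [antiperiodicLift, fourierCoeff_liftIco_eq, fourierCoeffOn_eq_integral]
  simp only [fourier_coe_apply, smul_eq_mul, zero_add, sub_zero]
  have fourier_eq (x : ℝ) :
      exp (2 * π * I * ((-n : ℤ) : ℂ) * x / ((2 * π : ℝ) : ℂ)) = e x := by
    simp only [e]
    congr 1
    push_cast
    field_simp
  simp_rw [fourier_eq]
  rw [← intervalIntegral.integral_add_adjacent_intervals (b := π)
    (hint.intervalIntegrable _ _) (hint.intervalIntegrable _ _), lower, upper, real_smul]
  push_cast
  ring

end Antiperiodic

noncomputable def sechKernel (w : ℂ) (x : ℝ) : ℂ :=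
  cosh (w * (π / 2 - x)) / cosh (w * π / 2)

theorem continuous_sechKernel (w : ℂ) : Continuous (sechKernel w) := by
  unfold sechKernel
  fun_prop

theorem sechKernel_pi_div_two (w : ℂ) : sechKernel w (π / 2) = 1 / cosh (w * π / 2) := by
  rw [sechKernel, ofReal_div, ofReal_ofNat, sub_self, mul_zero, Complex.cosh_zero]

section SechKernel

variable {w : ℂ}

theorem sechKernel_zero (hw : cosh (w * π / 2) ≠ 0) : sechKernel w 0 = 1 := by
  rw [sechKernel, ofReal_zero, sub_zero, ← mul_div_assoc, div_self hw]

theorem sechKernel_pi (hw : cosh (w * π / 2) ≠ 0) : sechKernel w π = 1 := by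
  rw [sechKernel, show w * (π / 2 - π) = -(w * π / 2) by ring, Complex.cosh_neg, div_self hw]

theorem sq_add_sq_ne_zero_of_cosh_ne_zero (hw : cosh (w * π / 2) ≠ 0) {n : ℤ} (hn : Odd n) :
    (n : ℂ) ^ 2 + w ^ 2 ≠ 0 := by
  intro h
  obtain ⟨k, rfl⟩ := hn
  have : w = (2 * k + 1) * I ∨ w = -((2 * k + 1) * I) := by
    rw [← sq_eq_sq_iff_eq_or_eq_neg]
    push_cast at h
    linear_combination h - (2 * k + 1 : ℂ) ^ 2 * I_sq
  have hcos : cosh ((2 * k + 1) * I * π / 2) = 0 := by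
    rw [show (2 * k + 1) * I * π / 2 = (2 * (k : ℂ) + 1) * π / 2 * I by ring, cosh_mul_I,
      Complex.cos_eq_zero_iff]
    exact ⟨k, rfl⟩
  rcases this with rfl | rfl
  · exact hw hcos
  · rw [neg_mul, neg_div, Complex.cosh_neg] at hw
    exact hw hcos

theorem hasDerivAt_primitive_exp_mul_cosh (μ : ℂ) (hw : w ^ 2 - μ ^ 2 ≠ 0) (x : ℝ) :
    HasDerivAt (fun y : ℝ => exp (μ * y) *
        (-μ * cosh (w * (π / 2 - y)) - w * sinh (w * (π / 2 - y))) / (w ^ 2 - μ ^ 2))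
      (exp (μ * x) * cosh (w * (π / 2 - x))) x := by
  have hlin : HasDerivAt (fun z : ℂ => w * (π / 2 - z)) (-w) x := by
    simpa using ((hasDerivAt_id (x : ℂ)).const_sub (π / 2 : ℂ)).const_mul w
  have hexp : HasDerivAt (fun z : ℂ => exp (μ * z)) (exp (μ * x) * μ) x := by
    simpa using ((hasDerivAt_id (x : ℂ)).const_mul μ).cexp
  have := (hexp.mul (((Complex.hasDerivAt_cosh _).comp _ hlin).const_mul (-μ)
    |>.sub (((Complex.hasDerivAt_sinh _).comp _ hlin).const_mul w))).div_const (w ^ 2 - μ ^ 2)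
  refine HasDerivAt.comp_ofReal (this.congr_deriv ?_)
  simp only [Pi.sub_apply, Function.comp_apply]
  field_simp
  ring

theorem integral_exp_mul_cosh {n : ℤ} (hn : Odd n) (hw : (n : ℂ) ^ 2 + w ^ 2 ≠ 0) :
    ∫ x in 0..π, exp (-(n * x * I)) * cosh (w * (π / 2 - x)) =
      -2 * n * I * cosh (w * π / 2) / (n ^ 2 + w ^ 2) := by
  have hμ : w ^ 2 - (-(n * I)) ^ 2 = n ^ 2 + w ^ 2 := by linear_combination -(n : ℂ) ^ 2 * I_sq
  have hexp_pi : exp (-(n * I) * π) = -1 := by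
    rw [show -(n * I) * π = ((-n : ℤ) : ℂ) * (π * I) by push_cast; ring, exp_int_mul,
      exp_pi_mul_I, hn.neg.neg_one_zpow]
  simp_rw [show ∀ x : ℝ, -((n : ℂ) * x * I) = -(n * I) * x from fun x => by ring]
  rw [intervalIntegral.integral_eq_sub_of_hasDerivAt
    (fun x _ => hasDerivAt_primitive_exp_mul_cosh (-(n * I)) (hμ ▸ hw) x)
    ((by fun_prop : Continuous _).intervalIntegrable _ _), hμ]
  rw [show w * (π / 2 - π) = -(w * π / 2) by ring, ofReal_zero, sub_zero, mul_zero,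
    Complex.exp_zero, hexp_pi, Complex.cosh_neg, Complex.sinh_neg, mul_div_assoc]
  field_simp
  ring

theorem integral_exp_mul_sechKernel (hw : cosh (w * π / 2) ≠ 0) {n : ℤ} (hn : Odd n) :
    ∫ x in 0..π, exp (-(n * x * I)) * sechKernel w x = -2 * n * I / (n ^ 2 + w ^ 2) := by
  simp_rw [sechKernel, mul_div_assoc']
  rw [intervalIntegral.integral_div,
    integral_exp_mul_cosh hn (sq_add_sq_ne_zero_of_cosh_ne_zero hw hn)]
  field_simp

end SechKernel

theorem one_sub_neg_one_pow_mul_I_pow_sub_neg_I_pow (n : ℕ) :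
    (1 - (-1 : ℂ) ^ n) * (I ^ n - (-I) ^ n) = 4 * I * chi n := by
  have hI : I ^ 4 = 1 := by rw [show 4 = 2 * 2 from rfl, pow_mul, I_sq]; norm_num
  have hmod2 : n % 2 = n % 4 % 2 := (Nat.mod_mod_of_dvd n (by norm_num)).symm
  have hpow (z : ℂ) (hz : z ^ 4 = 1) : z ^ n = z ^ (n % 4) := by
    conv_lhs => rw [← Nat.div_add_mod n 4, pow_add, pow_mul, hz, one_pow, one_mul]
  rw [hpow (-1) (by norm_num), hpow I hI, hpow (-I) (by rw [neg_pow, hI]; norm_num), chi, hmod2]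
  have : n % 4 < 4 := Nat.mod_lt n (by norm_num)
  interval_cases n % 4 <;> simp [pow_succ] <;> ring

theorem fourier_coe_pi_div_two (n : ℤ) :
    fourier n ((π / 2 : ℝ) : AddCircle (2 * π)) = I ^ n := by
  rw [fourier_coe_apply,
    show 2 * π * I * n * ((π / 2 : ℝ) : ℂ) / ((2 * π : ℝ) : ℂ) = n * (π / 2 * I) by
      push_cast; field_simp,
    exp_int_mul, exp_pi_div_two_mul_I]

noncomputable def sechDiffCoeff (w₁ w₂ : ℂ) (n : ℤ) : ℂ :=
  (1 - (-1) ^ n) * -I / π * (n * (1 / (n ^ 2 + w₁ ^ 2) - 1 / (n ^ 2 + w₂ ^ 2)))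

theorem eventually_le_intCast_sq (M : ℝ) : ∀ᶠ n : ℤ in Filter.cofinite, M ≤ (n : ℝ) ^ 2 := by
  have := (Filter.tendsto_pow_atTop two_ne_zero).comp
    (tendsto_norm_cocompact_atTop.comp Int.tendsto_coe_cofinite)
  filter_upwards [this.eventually_ge_atTop M] with n hn
  simpa [Real.norm_eq_abs, sq_abs] using hn

theorem summable_sechDiffCoeff (w₁ w₂ : ℂ) : Summable (sechDiffCoeff w₁ w₂) := by
  refine ((Real.summable_one_div_int_pow.2 one_lt_two).mul_left (8 * ‖w₂ ^ 2 - w₁ ^ 2‖ / π))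
    |>.of_norm_bounded_eventually ?_
  filter_upwards [eventually_le_intCast_sq 1, eventually_le_intCast_sq (2 * ‖w₁‖ ^ 2),
    eventually_le_intCast_sq (2 * ‖w₂‖ ^ 2)] with n hn h₁ h₂
  have hpre : ‖(1 - (-1) ^ n) * -I / (π : ℂ)‖ ≤ 2 / π := by
    rw [norm_div, norm_mul, norm_neg, norm_I, mul_one, norm_real,
      Real.norm_of_nonneg Real.pi_pos.le]
    gcongr
    calc ‖(1 : ℂ) - (-1) ^ n‖ ≤ ‖(1 : ℂ)‖ + ‖(-1 : ℂ) ^ n‖ := norm_sub_le _ _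
      _ = 2 := by rw [norm_zpow, norm_neg, norm_one, one_zpow]; norm_num
  rw [sechDiffCoeff, norm_mul]
  calc _ ≤ 2 / π * (4 * ‖w₂ ^ 2 - w₁ ^ 2‖ / (n : ℝ) ^ 2) := by
        gcongr
        exact_mod_cast norm_mul_one_div_sub_one_div_le hn h₁ h₂
    _ = _ := by ring

section SechDiff

variable {w₁ w₂ : ℂ}

theorem fourierCoeff_antiperiodicLift_sechKernel_sub (h₁ : cosh (w₁ * π / 2) ≠ 0)
    (h₂ : cosh (w₂ * π / 2) ≠ 0) (n : ℤ) :
    fourierCoeff (antiperiodicLift (sechKernel w₁ - sechKernel w₂)) n = sechDiffCoeff w₁ w₂ n := by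
  rw [fourierCoeff_antiperiodicLift ((continuous_sechKernel w₁).sub (continuous_sechKernel w₂))
    (by simp [sechKernel_pi, sechKernel_zero, h₁, h₂]), sechDiffCoeff]
  rcases n.even_or_odd with hn | hn
  · simp [hn.neg_one_zpow]
  · have hi (w : ℂ) : IntervalIntegrable (fun x : ℝ => exp (-(n * x * I)) * sechKernel w x)
        volume 0 π :=
      ((by fun_prop : Continuous fun x : ℝ => exp (-(n * x * I))).mul
        (continuous_sechKernel w)).intervalIntegrable _ _
    simp_rw [Pi.sub_apply, mul_sub]
    rw [intervalIntegral.integral_sub (hi w₁) (hi w₂), integral_exp_mul_sechKernel h₁ hn,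
      integral_exp_mul_sechKernel h₂ hn, hn.neg_one_zpow]
    field_simp

theorem sechDiffCoeff_mul_I_zpow_add_neg (n : ℕ) :
    sechDiffCoeff w₁ w₂ n * I ^ (n : ℤ) + sechDiffCoeff w₁ w₂ (-n) * I ^ (-(n : ℤ)) =
      4 / π * (chi n * n * (1 / (n ^ 2 + w₁ ^ 2) - 1 / (n ^ 2 + w₂ ^ 2))) := by
  have hneg (z : ℂ) : z ^ (-(n : ℤ)) = z⁻¹ ^ n := by rw [zpow_neg, zpow_natCast, inv_pow]
  simp only [sechDiffCoeff, hneg, zpow_natCast, inv_neg, inv_one, inv_I, Int.cast_neg,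
    Int.cast_natCast, neg_sq]
  set d : ℂ := 1 / (n ^ 2 + w₁ ^ 2) - 1 / (n ^ 2 + w₂ ^ 2)
  linear_combination (-I / π * n * d) * one_sub_neg_one_pow_mul_I_pow_sub_neg_I_pow n -
    4 * chi n * n / π * d * I_sq

theorem sechDiffCoeff_zero : sechDiffCoeff w₁ w₂ 0 = 0 := by
  simp [sechDiffCoeff]

theorem hasSum_chi_mul_sub (h₁ : cosh (w₁ * π / 2) ≠ 0) (h₂ : cosh (w₂ * π / 2) ≠ 0) :
    HasSum (fun n : ℕ => chi n * n * (1 / (n ^ 2 + w₁ ^ 2) - 1 / (n ^ 2 + w₂ ^ 2)))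
      (π / 4 * (1 / cosh (w₁ * π / 2) - 1 / cosh (w₂ * π / 2))) := by
  set h := sechKernel w₁ - sechKernel w₂
  have hcont : Continuous h := (continuous_sechKernel w₁).sub (continuous_sechKernel w₂)
  have hπ : h π = -h 0 := by simp [h, sechKernel_pi, sechKernel_zero, h₁, h₂]
  let f : C(AddCircle (2 * π), ℂ) := ⟨antiperiodicLift h, continuous_antiperiodicLift hcont hπ⟩
  have hcoeff : fourierCoeff f = sechDiffCoeff w₁ w₂ :=
    funext (fourierCoeff_antiperiodicLift_sechKernel_sub h₁ h₂)
  have hval : f (π / 2 : ℝ) = 1 / cosh (w₁ * π / 2) - 1 / cosh (w₂ * π / 2) := by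
    rw [ContinuousMap.coe_mk, antiperiodicLift_coe (by positivity) (by linarith [Real.pi_pos])]
    simp only [h, Pi.sub_apply, sechKernel_pi_div_two]
  have hf := has_pointwise_sum_fourier_series_of_summable
    (hcoeff ▸ summable_sechDiffCoeff w₁ w₂) ((π / 2 : ℝ) : AddCircle (2 * π))
  simp only [hcoeff, fourier_coe_pi_div_two, smul_eq_mul, hval] at hf
  have hpair := hf.nat_add_neg
  simp only [sechDiffCoeff_mul_I_zpow_add_neg, sechDiffCoeff_zero, zero_mul, add_zero] at hpair
  have h4π : (4 / π : ℂ) ≠ 0 := by simp [Real.pi_ne_zero]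
  have hcancel : (4 / π : ℂ) * (π / 4) = 1 := by field_simp
  rwa [← hasSum_mul_left_iff h4π, ← mul_assoc, hcancel, one_mul]

end SechDiff

theorem hasSum_chi_mul_im_div_normSq {w : ℂ} (hw : cosh (w * π / 2) ≠ 0) :
    HasSum (fun n : ℕ => chi n * n * (w ^ 2).im / normSq (n ^ 2 + w ^ 2))
      (π / 4 * (cosh (w * π / 2)).im / normSq (cosh (w * π / 2))) := by
  have hconj : cosh (starRingEnd ℂ w * π / 2) = starRingEnd ℂ (cosh (w * π / 2)) := by
    rw [← cosh_conj, map_div₀, map_mul, conj_ofReal, map_ofNat]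
  have h := hasSum_chi_mul_sub (w₁ := starRingEnd ℂ w) (w₂ := w)
    (by rw [hconj]; exact (map_ne_zero _).2 hw) hw
  have hterm (n : ℕ) : (chi n : ℂ) * n * (1 / (n ^ 2 + starRingEnd ℂ w ^ 2) - 1 / (n ^ 2 + w ^ 2)) =
      2 * I * ((chi n * n * (w ^ 2).im / normSq (n ^ 2 + w ^ 2) : ℝ) : ℂ) := by
    rw [show (n : ℂ) ^ 2 + starRingEnd ℂ w ^ 2 = starRingEnd ℂ (n ^ 2 + w ^ 2) by simp, one_div,
      one_div, inv_conj_sub_inv]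
    simp only [add_im, ← ofReal_natCast, ← ofReal_pow, ofReal_im, zero_add]
    push_cast
    ring
  have hvalue : (π / 4 * (1 / cosh (starRingEnd ℂ w * π / 2) - 1 / cosh (w * π / 2)) : ℂ) =
      2 * I * ((π / 4 * (cosh (w * π / 2)).im / normSq (cosh (w * π / 2)) : ℝ) : ℂ) := by
    rw [hconj, one_div, one_div, inv_conj_sub_inv]
    push_cast
    ring
  rw [funext hterm, hvalue, hasSum_mul_left_iff (by simp)] at h
  exact hasSum_ofReal.1 h

theorem sq_le_sqrt_pow_four_add_sq (b c : ℝ) : b ^ 2 ≤ √(b ^ 4 + c ^ 2) :=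
  Real.le_sqrt_of_sq_le (by nlinarith [sq_nonneg c])

theorem A_sq_sub_B_sq (b c : ℝ) : A b c ^ 2 - B b c ^ 2 = b ^ 2 := by
  rw [A, B, Real.sq_sqrt (by positivity),
    Real.sq_sqrt (by linarith [sq_le_sqrt_pow_four_add_sq b c])]
  ring

theorem two_mul_A_mul_B (b : ℝ) {c : ℝ} (hc : 0 ≤ c) : 2 * A b c * B b c = c := by
  refine (sq_eq_sq₀ ?_ hc).1 ?_
  · exact mul_nonneg (mul_nonneg zero_le_two (Real.sqrt_nonneg _)) (Real.sqrt_nonneg _)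
  · rw [mul_pow, mul_pow, A, B, Real.sq_sqrt (by positivity),
      Real.sq_sqrt (by linarith [sq_le_sqrt_pow_four_add_sq b c])]
    linear_combination Real.sq_sqrt (by positivity : 0 ≤ b ^ 4 + c ^ 2)

theorem A_pos {b : ℝ} (hb : b ≠ 0) (c : ℝ) : 0 < A b c :=
  Real.sqrt_pos.2 (by positivity)

theorem sq_A_add_B_mul_I (b : ℝ) {c : ℝ} (hc : 0 ≤ c) :
    ((A b c : ℂ) + B b c * I) ^ 2 = b ^ 2 + c * I := by
  have h₁ : ((A b c ^ 2 - B b c ^ 2 : ℝ) : ℂ) = b ^ 2 := by rw [A_sq_sub_B_sq]; push_cast; rfl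
  have h₂ : ((2 * A b c * B b c : ℝ) : ℂ) = c := by rw [two_mul_A_mul_B b hc]
  push_cast at h₁ h₂
  linear_combination h₁ + I * h₂ + (B b c : ℂ) ^ 2 * I_sq

theorem chi_series_sin (b c : ℝ) (hb : 0 < b) (hc : 0 < c) :
    ∑' n : ℕ, chi (n + 1) * ((n : ℝ) + 1) / ((((n : ℝ) + 1) ^ 2 + b ^ 2) ^ 2 + c ^ 2)
      = (π / (4 * c)) *
          ((Real.sinh (π / 2 * A b c) * Real.sin (π / 2 * B b c)) /
            ((Real.sinh (π / 2 * A b c)) ^ 2 + (Real.cos (π / 2 * B b c)) ^ 2)) := by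
  set w : ℂ := A b c + B b c * I
  have hw : w ^ 2 = (b ^ 2 : ℝ) + c * I := by rw [sq_A_add_B_mul_I b hc.le]; push_cast; rfl
  have harg : w * π / 2 = (π / 2 * A b c : ℝ) + (π / 2 * B b c : ℝ) * I := by push_cast; ring
  have hcosh : cosh (w * π / 2) ≠ 0 := by
    have : 0 < Real.sinh (π / 2 * A b c) :=
      Real.sinh_pos_iff.2 (mul_pos (by positivity) (A_pos hb.ne' c))
    rw [← normSq_pos, harg, normSq_cosh_add_mul_I]
    positivity
  have hterm (n : ℕ) : chi n * n * (w ^ 2).im / normSq (n ^ 2 + w ^ 2) =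
      c * (chi n * n / ((n ^ 2 + b ^ 2) ^ 2 + c ^ 2)) := by
    rw [hw, ← ofReal_natCast, ← ofReal_pow, ← add_assoc, ← ofReal_add, normSq_add_mul_I]
    simp only [add_im, ofReal_im, im_ofReal_mul, I_im, mul_one, zero_add]
    ring
  have hsum := hasSum_chi_mul_im_div_normSq hcosh
  rw [funext hterm, harg, cosh_add_mul_I_im, normSq_cosh_add_mul_I,
    show ∀ x : ℝ, π / 4 * x = c * (π / (4 * c) * x) from fun x => by field_simp, mul_div_assoc,
    hasSum_mul_left_iff hc.ne'] at hsum
  have hshift := (hasSum_nat_add_iff' 1).2 hsum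
  simp only [Finset.sum_range_one, Nat.cast_zero, mul_zero, zero_div, sub_zero, Nat.cast_add,
    Nat.cast_one] at hshift
  rw [hshift.tsum_eq, mul_div_assoc]
end

section
/- For all real x > 0, η³(i·4x/π) = Σ_{n≥1} χ(n) · n · e^{−n²x}. -/
open Real

/-!
With `q = e^{-8x}` one has `η(i·4x/π) = e^{-x/3} ∏ (1 - qⁿ)`, and `x + 8x·m(m+1)/2 = (2m+1)² x`,
so the theorem is Jacobi's identity `∏ (1 - qⁿ)³ = ∑ (-1)ᵐ (2m+1) q^{m(m+1)/2}`, the odd `n = 2m+1`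
being exactly those with `χ(n) = (-1)ᵐ ≠ 0`.

Jacobi's identity comes from the finite triple product
`∏_{i<N} (1 - w q^{i+1})(1 - w⁻¹ qⁱ) = ∑_k (-1)ᵏ [2N, N+k]_q q^{k(k+1)/2} wᵏ`, itself Cauchy's
`q`-binomial theorem after a change of variable. Its left side vanishes at `w = 1`, so
differentiating there gives `(q;q)_N (q;q)_{N-1} = ∑_k (-1)ᵏ k [2N, N+k]_q q^{k(k+1)/2}`.
As `N → ∞` the Gaussian binomials `[2N, N+k]_q` tend to `1/(q;q)_∞` and stay below `1/(q;q)_∞²`,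
so dominated convergence gives `(q;q)_∞² = (q;q)_∞⁻¹ ∑ (-1)ᵐ (2m+1) q^{m(m+1)/2}`.
-/

open Filter Finset Topology

namespace QSeries

lemma choose_two_succ (n : ℕ) : (n + 1).choose 2 = n.choose 2 + n := by
  rw [Nat.choose_succ_succ', Nat.choose_one_right, add_comm]

lemma sum_range_two_mul_add_one {M : Type*} [AddCommMonoid M] (f : ℕ → M) (n : ℕ) :
    ∑ j ∈ range (2 * n + 1), f j = ∑ m ∈ range n, (f (n + m) + f (n - 1 - m)) + f (2 * n) := by
  rw [sum_range_succ, two_mul, sum_range_add, sum_add_distrib, ← sum_range_reflect f n,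
    add_comm (∑ j ∈ range n, f (n - 1 - j))]

section QBinomial

variable {R : Type*} [CommRing R]

-- `m - j` truncates only for `j > m`, where `qBinom q m j = 0`.
def qBinom (q : R) : ℕ → ℕ → R
  | 0, 0 => 1
  | 0, _ + 1 => 0
  | _ + 1, 0 => 1
  | m + 1, j + 1 => qBinom q m (j + 1) + q ^ (m - j) * qBinom q m j

@[simp]
lemma qBinom_zero_right (q : R) (m : ℕ) : qBinom q m 0 = 1 := by
  cases m <;> rfl

lemma qBinom_succ_succ (q : R) (m j : ℕ) :
    qBinom q (m + 1) (j + 1) = qBinom q m (j + 1) + q ^ (m - j) * qBinom q m j :=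
  rfl

lemma qBinom_eq_zero_of_lt (q : R) {m j : ℕ} (h : m < j) : qBinom q m j = 0 := by
  induction m generalizing j with
  | zero => obtain ⟨j, rfl⟩ := Nat.exists_eq_add_one_of_ne_zero h.ne'; rfl
  | succ m ih =>
    obtain ⟨j, rfl⟩ := Nat.exists_eq_add_one_of_ne_zero (by omega : j ≠ 0)
    rw [qBinom_succ_succ, ih (by omega), ih (by omega), mul_zero, add_zero]

@[simp]
lemma qBinom_self (q : R) (m : ℕ) : qBinom q m m = 1 := by
  induction m with
  | zero => rfl
  | succ m ih => rw [qBinom_succ_succ, qBinom_eq_zero_of_lt q m.lt_succ_self, ih]; simp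

lemma qBinom_nonneg [PartialOrder R] [IsOrderedRing R] {q : R} (hq : 0 ≤ q) (m j : ℕ) :
    0 ≤ qBinom q m j := by
  induction m generalizing j with
  | zero => cases j <;> simp [qBinom]
  | succ m ih =>
    cases j with
    | zero => simp
    | succ j =>
      have := ih j
      have := ih (j + 1)
      rw [qBinom_succ_succ]
      positivity

/-- Cauchy's `q`-binomial theorem. -/
theorem prod_one_add_mul_pow_eq_sum (q t : R) (m : ℕ) :
    ∏ i ∈ range m, (1 + t * q ^ i) =
      ∑ j ∈ range (m + 1), q ^ j.choose 2 * qBinom q m j * t ^ j := by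
  induction m with
  | zero => simp
  | succ m ih =>
    have hstep : ∀ j, q ^ (j + 1).choose 2 * qBinom q (m + 1) (j + 1) * t ^ (j + 1) =
        q ^ (j + 1).choose 2 * qBinom q m (j + 1) * t ^ (j + 1) +
          q ^ j.choose 2 * qBinom q m j * t ^ j * (t * q ^ m) := by
      intro j
      rcases le_or_gt j m with hj | hj
      · obtain ⟨k, rfl⟩ := Nat.exists_eq_add_of_le hj
        rw [qBinom_succ_succ, choose_two_succ, Nat.add_sub_cancel_left]
        ring
      · rw [qBinom_succ_succ, qBinom_eq_zero_of_lt q hj,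
          qBinom_eq_zero_of_lt q (by omega : m < j + 1)]
        ring
    have hshift := sum_range_succ' (fun j => q ^ j.choose 2 * qBinom q m j * t ^ j) (m + 1)
    rw [sum_range_succ, qBinom_eq_zero_of_lt q m.lt_succ_self] at hshift
    rw [prod_range_succ, ih, sum_range_succ' _ (m + 1), sum_congr rfl fun j _ => hstep j,
      sum_add_distrib, ← sum_mul]
    simp only [qBinom_zero_right] at hshift ⊢
    linear_combination hshift

/-- The `q`-Pochhammer symbol `(q; q)_N`. -/
def qPoch (q : R) (N : ℕ) : R := ∏ i ∈ range N, (1 - q ^ (i + 1))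

lemma qPoch_succ (q : R) (N : ℕ) : qPoch q (N + 1) = qPoch q N * (1 - q ^ (N + 1)) :=
  prod_range_succ _ _

theorem qBinom_add_mul_qPoch (q : R) (a b : ℕ) :
    qBinom q (a + b) a * (qPoch q a * qPoch q b) = qPoch q (a + b) := by
  induction hn : a + b generalizing a b with
  | zero =>
    obtain ⟨rfl, rfl⟩ : a = 0 ∧ b = 0 := by omega
    simp [qPoch]
  | succ n ih =>
    rcases a with _ | a
    · simp [qPoch, ← hn]
    rcases b with _ | b
    · simp [qPoch, ← hn]
    have h₁ := ih (a + 1) b (by omega)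
    have h₂ := ih a (b + 1) (by omega)
    have hq : q ^ (b + 1) * q ^ (a + 1) = q ^ (n + 1) := by rw [← pow_add]; congr 1; omega
    rw [qPoch_succ q a] at h₁
    rw [qPoch_succ q b] at h₂
    rw [qBinom_succ_succ, show n - a = b + 1 by omega, qPoch_succ q n, qPoch_succ q a,
      qPoch_succ q b]
    linear_combination (1 - q ^ (b + 1)) * h₁ + q ^ (b + 1) * (1 - q ^ (a + 1)) * h₂ -
      qPoch q n * hq

end QBinomial

section TripleProduct

variable {K : Type*} [Field K]

-- With `k = j - N`, this is `k (k + 1) / 2`.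
def tripleExp (N j : ℕ) : ℤ := N.choose 2 + j.choose 2 + (1 - N) * j

lemma tripleExp_add (n m : ℕ) : tripleExp n (n + m) = (m + 1).choose 2 := by
  apply Int.cast_injective (α := ℚ)
  simp only [tripleExp]
  push_cast [Nat.cast_choose_two]
  ring

lemma tripleExp_add_add_one (m k : ℕ) : tripleExp (m + k + 1) k = (m + 1).choose 2 := by
  apply Int.cast_injective (α := ℚ)
  simp only [tripleExp]
  push_cast [Nat.cast_choose_two]
  ring

/-- The finite Jacobi triple product identity. -/
theorem prod_mul_prod_eq_sum {q w : K} (hq : q ≠ 0) (hw : w ≠ 0) (N : ℕ) :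
    (∏ i ∈ range N, (1 - w * q ^ (i + 1))) * ∏ i ∈ range N, (1 - w⁻¹ * q ^ i) =
      ∑ j ∈ range (2 * N + 1),
        (-1) ^ (N + j) * qBinom q (2 * N) j * q ^ tripleExp N j * w ^ ((j : ℤ) - N) := by
  set v := w * q ^ (1 - (N : ℤ)) with hv_def
  have hv : ∀ k : ℕ, v * q ^ k = w * q ^ ((k : ℤ) + 1 - N) := fun k => by
    rw [mul_assoc, ← zpow_natCast, ← zpow_add₀ hq]; ring_nf
  have h₁ : ∏ i ∈ range N, (1 - w * q ^ (i + 1)) = ∏ i ∈ range N, (1 - v * q ^ (N + i)) := by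
    refine prod_congr rfl fun i _ => ?_
    rw [hv, ← zpow_natCast]; push_cast; ring_nf
  have h₂ : ∏ i ∈ range N, (1 - w⁻¹ * q ^ i) =
      (-w⁻¹) ^ N * q ^ N.choose 2 * ∏ i ∈ range N, (1 - v * q ^ i) := by
    rw [← prod_range_reflect (fun i => 1 - v * q ^ i), mul_assoc, Nat.choose_two_right,
      ← sum_range_id, ← prod_pow_eq_pow_sum, show (-w⁻¹) ^ N = ∏ _i ∈ range N, -w⁻¹ by simp,
      ← prod_mul_distrib, ← prod_mul_distrib]
    refine prod_congr rfl fun i hi => ?_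
    have hi : i < N := mem_range.mp hi
    have : q ^ i * (v * q ^ (N - 1 - i)) = w := by
      rw [hv, ← zpow_natCast, mul_left_comm, ← zpow_add₀ hq, Nat.cast_sub (by omega),
        Nat.cast_sub (by omega)]
      ring_nf; simp
    field_simp
    linear_combination -this
  calc (∏ i ∈ range N, (1 - w * q ^ (i + 1))) * ∏ i ∈ range N, (1 - w⁻¹ * q ^ i)
      = (-w⁻¹) ^ N * q ^ N.choose 2 * ∏ i ∈ range (2 * N), (1 + -v * q ^ i) := by
        rw [h₁, h₂, two_mul, prod_range_add]
        simp only [neg_mul, ← sub_eq_add_neg]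
        ring
    _ = ∑ j ∈ range (2 * N + 1),
          (-w⁻¹) ^ N * q ^ N.choose 2 * (q ^ j.choose 2 * qBinom q (2 * N) j * (-v) ^ j) := by
        rw [prod_one_add_mul_pow_eq_sum, mul_sum]
    _ = _ := by
        refine sum_congr rfl fun j _ => ?_
        rw [tripleExp, zpow_add₀ hq, zpow_add₀ hq, zpow_mul, zpow_natCast, zpow_natCast,
          zpow_natCast, zpow_sub₀ hw, zpow_natCast, zpow_natCast, neg_pow w⁻¹, neg_pow v, hv_def,
          mul_pow, pow_add, inv_pow]
        field_simp

end TripleProduct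

section Derivative

variable {𝕜 : Type*} [NontriviallyNormedField 𝕜]

/-- The derivative at `w = 1` of the finite triple product identity. -/
theorem qPoch_succ_mul_qPoch_eq_sum {q : 𝕜} (hq : q ≠ 0) (N : ℕ) :
    qPoch q (N + 1) * qPoch q N =
      ∑ j ∈ range (2 * (N + 1) + 1), (-1) ^ (N + 1 + j) * qBinom q (2 * (N + 1)) j *
        q ^ tripleExp (N + 1) j * ((j : 𝕜) - (N + 1)) := by
  set c : ℕ → 𝕜 := fun j =>
    (-1) ^ (N + 1 + j) * qBinom q (2 * (N + 1)) j * q ^ tripleExp (N + 1) j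
  set L : 𝕜 → 𝕜 := fun w =>
    (∏ i ∈ range (N + 1), (1 - w * q ^ (i + 1))) * ∏ i ∈ range N, (1 - w⁻¹ * q ^ (i + 1))
  have hL : DifferentiableAt 𝕜 L 1 := by fun_prop (disch := norm_num)
  have hlhs : HasDerivAt (fun w => L w * (1 - w⁻¹)) (L 1) 1 := by
    simpa using hL.hasDerivAt.fun_mul ((hasDerivAt_inv one_ne_zero).const_sub 1)
  have hrhs : HasDerivAt
      (fun w => ∑ j ∈ range (2 * (N + 1) + 1), c j * w ^ ((j : ℤ) - (N + 1 : ℕ)))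
      (∑ j ∈ range (2 * (N + 1) + 1), c j * ((j : 𝕜) - (N + 1))) 1 := by
    refine HasDerivAt.fun_sum fun j _ => ?_
    simpa using (hasDerivAt_zpow ((j : ℤ) - (N + 1 : ℕ)) 1 (Or.inl one_ne_zero)).const_mul (c j)
  have htriple : (fun w => L w * (1 - w⁻¹)) =ᶠ[𝓝 1]
      fun w => ∑ j ∈ range (2 * (N + 1) + 1), c j * w ^ ((j : ℤ) - (N + 1 : ℕ)) := by
    filter_upwards [eventually_ne_nhds one_ne_zero] with w hw
    rw [← prod_mul_prod_eq_sum hq hw, prod_range_succ' (fun i => 1 - w⁻¹ * q ^ i)]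
    simp only [L, pow_zero, mul_one]
    ring
  calc qPoch q (N + 1) * qPoch q N = L 1 := by simp [L, qPoch]
    _ = _ := (hlhs.congr_of_eventuallyEq htriple.symm).unique hrhs

/-- The terms `k = m` and `k = -(m + 1)` of the derivative above, after `N ↦ N + 1`. -/
def jacobiTerm {R : Type*} [CommRing R] (q : R) (N m : ℕ) : R :=
  (-1) ^ m * q ^ (m + 1).choose 2 *
    (m * qBinom q (2 * (N + 1)) (N + 1 + m) + (m + 1) * qBinom q (2 * (N + 1)) (N - m))

theorem qPoch_succ_mul_qPoch_eq {q : 𝕜} (hq : q ≠ 0) (N : ℕ) :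
    qPoch q (N + 1) * qPoch q N =
      ∑ m ∈ range (N + 1), jacobiTerm q N m + (-1) ^ (N + 1) * (N + 1) * q ^ (N + 2).choose 2 := by
  rw [qPoch_succ_mul_qPoch_eq_sum hq, sum_range_two_mul_add_one]
  congr 1
  · refine sum_congr rfl fun m hm => ?_
    obtain ⟨k, rfl⟩ := Nat.exists_eq_add_of_le (Nat.lt_succ_iff.mp (mem_range.mp hm))
    have hsgn : (-1 : 𝕜) ^ (m + k + 1 + k) = -(-1) ^ m := by
      rw [show m + k + 1 + k = m + 2 * k + 1 by ring, pow_succ, pow_add, pow_mul]; simp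
    rw [jacobiTerm, show m + k + 1 - 1 - m = k by omega, Nat.add_sub_cancel_left, tripleExp_add,
      tripleExp_add_add_one, zpow_natCast, hsgn, ← add_assoc, ← two_mul, pow_add, pow_mul]
    push_cast
    ring
  · rw [two_mul, tripleExp_add, zpow_natCast, qBinom_self, ← two_mul, pow_add, pow_mul]
    push_cast
    ring

end Derivative

section EulerProduct

variable {q : ℝ}

noncomputable def eulerProd (q : ℝ) : ℝ := ∏' n : ℕ, (1 - q ^ (n + 1))

lemma one_sub_pow_succ_pos (hq0 : 0 ≤ q) (hq1 : q < 1) (n : ℕ) : 0 < 1 - q ^ (n + 1) :=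
  sub_pos.mpr (pow_lt_one₀ hq0 hq1 n.succ_ne_zero)

lemma summable_neg_pow_succ (hq0 : 0 ≤ q) (hq1 : q < 1) : Summable fun n : ℕ => -q ^ (n + 1) :=
  ((summable_geometric_of_lt_one hq0 hq1).mul_left q).neg.congr fun n => by ring

lemma hasProd_eulerProd (hq0 : 0 ≤ q) (hq1 : q < 1) :
    HasProd (fun n : ℕ => 1 - q ^ (n + 1)) (eulerProd q) := by
  have h := (Real.multipliable_one_add_of_summable (summable_neg_pow_succ hq0 hq1)).hasProd
  simp only [← sub_eq_add_neg] at h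
  exact h

lemma eulerProd_pos (hq0 : 0 ≤ q) (hq1 : q < 1) : 0 < eulerProd q := by
  have hlog := Real.summable_log_one_add_of_summable (summable_neg_pow_succ hq0 hq1)
  simp only [← sub_eq_add_neg] at hlog
  rw [eulerProd, ← Real.rexp_tsum_eq_tprod (one_sub_pow_succ_pos hq0 hq1) hlog]
  exact Real.exp_pos _

lemma tendsto_qPoch (hq0 : 0 ≤ q) (hq1 : q < 1) :
    Tendsto (qPoch q) atTop (𝓝 (eulerProd q)) :=
  (hasProd_eulerProd hq0 hq1).tendsto_prod_nat

lemma qPoch_pos (hq0 : 0 ≤ q) (hq1 : q < 1) (N : ℕ) : 0 < qPoch q N :=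
  prod_pos fun n _ => one_sub_pow_succ_pos hq0 hq1 n

lemma qPoch_le_one (hq0 : 0 ≤ q) (hq1 : q < 1) (N : ℕ) : qPoch q N ≤ 1 :=
  prod_le_one (fun n _ => (one_sub_pow_succ_pos hq0 hq1 n).le)
    fun _ _ => sub_le_self _ (pow_nonneg hq0 _)

lemma antitone_qPoch (hq0 : 0 ≤ q) (hq1 : q < 1) : Antitone (qPoch q) :=
  antitone_nat_of_succ_le fun N => by
    rw [qPoch_succ]
    exact mul_le_of_le_one_right (qPoch_pos hq0 hq1 N).le (sub_le_self _ (pow_nonneg hq0 _))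

lemma eulerProd_le_qPoch (hq0 : 0 ≤ q) (hq1 : q < 1) (N : ℕ) : eulerProd q ≤ qPoch q N :=
  (antitone_qPoch hq0 hq1).le_of_tendsto (tendsto_qPoch hq0 hq1) N

lemma qBinom_add_eq_div (hq0 : 0 ≤ q) (hq1 : q < 1) (a b : ℕ) :
    qBinom q (a + b) a = qPoch q (a + b) / (qPoch q a * qPoch q b) :=
  eq_div_of_mul_eq (mul_pos (qPoch_pos hq0 hq1 a) (qPoch_pos hq0 hq1 b)).ne'
    (qBinom_add_mul_qPoch q a b)

lemma qBinom_le_inv_eulerProd_sq (hq0 : 0 ≤ q) (hq1 : q < 1) (m j : ℕ) :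
    qBinom q m j ≤ (eulerProd q ^ 2)⁻¹ := by
  have hP := eulerProd_pos hq0 hq1
  rcases lt_or_ge m j with h | h
  · rw [qBinom_eq_zero_of_lt q h]; positivity
  obtain ⟨b, rfl⟩ := Nat.exists_eq_add_of_le h
  rw [qBinom_add_eq_div hq0 hq1, ← one_div, sq]
  exact div_le_div₀ zero_le_one (qPoch_le_one hq0 hq1 _) (by positivity)
    (mul_le_mul (eulerProd_le_qPoch hq0 hq1 _) (eulerProd_le_qPoch hq0 hq1 _) hP.le
      (qPoch_pos hq0 hq1 _).le)

lemma tendsto_qBinom (hq0 : 0 ≤ q) (hq1 : q < 1) {a b M : ℕ → ℕ}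
    (ha : Tendsto a atTop atTop) (hb : Tendsto b atTop atTop)
    (hM : ∀ᶠ N in atTop, a N + b N = M N) :
    Tendsto (fun N => qBinom q (M N) (a N)) atTop (𝓝 (eulerProd q)⁻¹) := by
  have hP := eulerProd_pos hq0 hq1
  have hab : Tendsto (fun N => a N + b N) atTop atTop :=
    tendsto_atTop_mono (fun N => Nat.le_add_right _ _) ha
  have hlim := ((tendsto_qPoch hq0 hq1).comp hab).div
    (((tendsto_qPoch hq0 hq1).comp ha).mul ((tendsto_qPoch hq0 hq1).comp hb)) (by positivity)
  rw [show eulerProd q / (eulerProd q * eulerProd q) = (eulerProd q)⁻¹ by field_simp] at hlim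
  refine hlim.congr' (hM.mono fun N hN => ?_)
  change qPoch q (a N + b N) / (qPoch q (a N) * qPoch q (b N)) = _
  rw [← qBinom_add_eq_div hq0 hq1, hN]

end EulerProduct

section Jacobi

variable {q : ℝ}

lemma tendsto_jacobiTerm (hq0 : 0 ≤ q) (hq1 : q < 1) (m : ℕ) :
    Tendsto (fun N => jacobiTerm q N m) atTop
      (𝓝 ((-1) ^ m * (2 * m + 1) * q ^ (m + 1).choose 2 * (eulerProd q)⁻¹)) := by
  have h₁ : Tendsto (fun N => qBinom q (2 * (N + 1)) (N + 1 + m)) atTop (𝓝 (eulerProd q)⁻¹) :=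
    tendsto_qBinom hq0 hq1 ((tendsto_add_atTop_nat m).comp (tendsto_add_atTop_nat 1))
      ((tendsto_sub_atTop_nat m).comp (tendsto_add_atTop_nat 1))
      ((eventually_ge_atTop m).mono fun N hN => by simp only [Function.comp_apply]; omega)
  have h₂ : Tendsto (fun N => qBinom q (2 * (N + 1)) (N - m)) atTop (𝓝 (eulerProd q)⁻¹) :=
    tendsto_qBinom hq0 hq1 (tendsto_sub_atTop_nat m)
      ((tendsto_add_atTop_nat m).comp (tendsto_add_atTop_nat 2))
      ((eventually_ge_atTop m).mono fun N hN => by simp only [Function.comp_apply]; omega)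
  convert ((h₁.const_mul (m : ℝ)).add (h₂.const_mul ((m : ℝ) + 1))).const_mul
    ((-1) ^ m * q ^ (m + 1).choose 2) using 2
  · rw [jacobiTerm]
  · ring

lemma norm_jacobiTerm_le (hq0 : 0 ≤ q) (hq1 : q < 1) (N m : ℕ) :
    ‖jacobiTerm q N m‖ ≤ (2 * m + 1) * q ^ m * (eulerProd q ^ 2)⁻¹ := by
  have hA := qBinom_nonneg hq0 (2 * (N + 1)) (N + 1 + m)
  have hB := qBinom_nonneg hq0 (2 * (N + 1)) (N - m)
  rw [jacobiTerm, norm_mul, norm_mul, norm_pow, norm_neg, norm_one, one_pow, one_mul,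
    Real.norm_of_nonneg (pow_nonneg hq0 _), Real.norm_of_nonneg (by positivity)]
  calc q ^ (m + 1).choose 2 *
        (m * qBinom q (2 * (N + 1)) (N + 1 + m) + (m + 1) * qBinom q (2 * (N + 1)) (N - m))
      ≤ q ^ m * (m * (eulerProd q ^ 2)⁻¹ + (m + 1) * (eulerProd q ^ 2)⁻¹) := by
        refine mul_le_mul (pow_le_pow_of_le_one hq0 hq1.le (by rw [choose_two_succ]; omega))
          ?_ (by positivity) (by positivity)
        gcongr <;> exact qBinom_le_inv_eulerProd_sq hq0 hq1 _ _
    _ = (2 * m + 1) * q ^ m * (eulerProd q ^ 2)⁻¹ := by ring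

lemma summable_two_mul_add_one_mul_pow (hq0 : 0 ≤ q) (hq1 : q < 1) :
    Summable fun m : ℕ => (2 * m + 1) * q ^ m := by
  have hq : ‖q‖ < 1 := by rwa [Real.norm_of_nonneg hq0]
  have := ((summable_pow_mul_geometric_of_norm_lt_one 1 hq).mul_left 2).add
    (summable_geometric_of_norm_lt_one hq)
  exact this.congr fun m => by ring

lemma tendsto_sum_range_jacobiTerm (hq0 : 0 ≤ q) (hq1 : q < 1) :
    Tendsto (fun N => ∑ m ∈ range (N + 1), jacobiTerm q N m) atTop
      (𝓝 ((∑' m : ℕ, (-1) ^ m * (2 * m + 1) * q ^ (m + 1).choose 2) * (eulerProd q)⁻¹)) := by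
  have hsum : ∀ N, ∑ m ∈ range (N + 1), jacobiTerm q N m =
      ∑' m, if m ≤ N then jacobiTerm q N m else 0 := fun N => by
    rw [tsum_eq_sum (s := range (N + 1)) fun m hm => if_neg (by simpa using hm)]
    exact sum_congr rfl fun m hm => (if_pos (by simpa [Nat.lt_succ_iff] using hm)).symm
  simp only [hsum, ← tsum_mul_right]
  refine tendsto_tsum_of_dominated_convergence
    ((summable_two_mul_add_one_mul_pow hq0 hq1).mul_right (eulerProd q ^ 2)⁻¹)
    (fun m => (tendsto_jacobiTerm hq0 hq1 m).congr'
      ((eventually_ge_atTop m).mono fun N hN => (if_pos hN).symm))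
    (Eventually.of_forall fun N m => ?_)
  split_ifs
  · exact norm_jacobiTerm_le hq0 hq1 N m
  · have := eulerProd_pos hq0 hq1
    rw [norm_zero]
    positivity

/-- Jacobi's identity. -/
theorem eulerProd_pow_three (hq0 : 0 < q) (hq1 : q < 1) :
    eulerProd q ^ 3 = ∑' m : ℕ, (-1) ^ m * (2 * m + 1) * q ^ (m + 1).choose 2 := by
  have hres : Tendsto (fun N : ℕ => (-1) ^ (N + 1) * (N + 1) * q ^ (N + 2).choose 2) atTop
      (𝓝 0) := by
    refine squeeze_zero_norm (fun N => ?_)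
      ((tendsto_self_mul_const_pow_of_lt_one hq0.le hq1).comp (tendsto_add_atTop_nat 1))
    rw [norm_mul, norm_mul, norm_pow, norm_neg, norm_one, one_pow, one_mul,
      Real.norm_of_nonneg (by positivity), Real.norm_of_nonneg (by positivity), Function.comp_apply]
    push_cast
    exact mul_le_mul_of_nonneg_left
      (pow_le_pow_of_le_one hq0.le hq1.le (by rw [choose_two_succ]; omega)) (by positivity)
  have hlim : Tendsto (fun N => qPoch q (N + 1) * qPoch q N) atTop
      (𝓝 (eulerProd q * eulerProd q)) :=
    ((tendsto_qPoch hq0.le hq1).comp (tendsto_add_atTop_nat 1)).mul (tendsto_qPoch hq0.le hq1)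
  simp_rw [qPoch_succ_mul_qPoch_eq hq0.ne'] at hlim
  have h := tendsto_nhds_unique hlim ((tendsto_sum_range_jacobiTerm hq0.le hq1).add hres)
  have hP := eulerProd_pos hq0.le hq1
  rw [add_zero] at h
  field_simp at h
  linear_combination h

end Jacobi

end QSeries

open QSeries

lemma dedekindEtaI_four_mul_div_pi (x : ℝ) :
    dedekindEtaI (4 * x / π) = rexp (-(x / 3)) * eulerProd (rexp (-(8 * x))) := by
  unfold dedekindEtaI eulerProd
  congr 1
  · congr 1
    field_simp
    ring
  · refine tprod_congr fun n => ?_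
    rw [← Real.exp_nat_mul]
    congr 2
    push_cast
    field_simp
    ring

lemma exp_cube_mul_exp_pow_choose_two (x : ℝ) (m : ℕ) :
    rexp (-(x / 3)) ^ 3 * rexp (-(8 * x)) ^ (m + 1).choose 2 = rexp (-((2 * m + 1) ^ 2) * x) := by
  rw [← Real.exp_nat_mul, ← Real.exp_nat_mul, ← Real.exp_add, Nat.cast_choose_two]
  congr 1
  push_cast
  ring

lemma chi_two_mul_add_one (m : ℕ) : chi (2 * m + 1) = (-1) ^ m := by
  rcases Nat.even_or_odd m with hm | hm
  · rw [hm.neg_one_pow, chi, if_neg (by omega), if_pos (by obtain ⟨k, rfl⟩ := hm; omega)]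
  · rw [hm.neg_one_pow, chi, if_neg (by omega), if_neg (by obtain ⟨k, rfl⟩ := hm; omega)]

lemma chi_eq_zero_of_even {n : ℕ} (hn : Even n) : chi n = 0 := by
  simp [chi, Nat.even_iff.mp hn]

lemma support_chi_succ_mul_subset (f : ℕ → ℝ) :
    Function.support (fun n => chi (n + 1) * f n) ⊆ Set.range (2 * ·) := by
  intro n hn
  rcases Nat.even_or_odd n with ⟨k, rfl⟩ | hodd
  · exact ⟨k, two_mul k⟩
  · exact absurd (by simp [chi_eq_zero_of_even hodd.add_one]) hn

theorem eta3_series (x : ℝ) (hx : 0 < x) :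
    (dedekindEtaI (4 * x / π)) ^ 3
      = ∑' n : ℕ, chi (n + 1) * ((n : ℝ) + 1) * Real.exp (-(((n : ℝ) + 1) ^ 2) * x) := by
  have hq1 : rexp (-(8 * x)) < 1 := Real.exp_lt_one_iff.mpr (by linarith)
  simp_rw [mul_assoc (chi _)]
  rw [dedekindEtaI_four_mul_div_pi, mul_pow, eulerProd_pow_three (Real.exp_pos _) hq1,
    ← (mul_right_injective₀ two_ne_zero).tsum_eq (support_chi_succ_mul_subset _),
    ← tsum_mul_left]
  refine tsum_congr fun m => ?_
  rw [chi_two_mul_add_one]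
  push_cast
  rw [← exp_cube_mul_exp_pow_choose_two]
  ring
end
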